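/- Let A be a ring (or algebra) and G a subgroup of the group of units of A. If W is a c.e. set of words in the generators of G whose images in G are pairwise distinct, then the corresponding images in A are pairwise distinct; consequently, if the word problem of A (as a ceer) is dark and G is infinite, then the word problem of G is dark. -/

import Mathlib

/-! The inclusion `G → A` is injective, so two `G`-words are equal in `G` exactly when their
translations are equal in `A`. Hence the image under the computable translation of an infinite
c.e. transversal for the word problem of `G` would be an infinite c.e. transversal for that of `A`,
and images of c.e. sets under computable maps are c.e. (search over pairs of an input and a
step bound). -/

/-- A predicate on a primcodable type is computably enumerable (c.e.). -/
def CePred {α : Type} [Primcodable α] (p : α → Prop) : Prop :=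
  Partrec fun a => Part.assert (p a) fun _ => Part.some ()

/-- The `e`-th c.e. set `W_e`. -/
def WSet (e : ℕ) : Set ℕ :=
  {n | ((Denumerable.ofNat Nat.Partrec.Code e).eval n).Dom}

/-- A ceer: a computably enumerable equivalence relation on ℕ. -/
def Ceer (E : ℕ → ℕ → Prop) : Prop :=
  Equivalence E ∧ CePred fun p : ℕ × ℕ => E p.1 p.2

/-- `E` has infinitely many equivalence classes. -/
def InfiniteClasses (E : ℕ → ℕ → Prop) : Prop :=
  ∀ l : List ℕ, ∃ n, ∀ m ∈ l, ¬ E n m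

/-- `E` is light: some infinite c.e. set is an `E`-transversal (pairwise inequivalent). -/
def Light (E : ℕ → ℕ → Prop) : Prop :=
  ∃ e, (WSet e).Infinite ∧ ∀ i ∈ WSet e, ∀ j ∈ WSet e, i ≠ j → ¬ E i j

/-- `E` is dark: infinitely many classes, but not light. -/
def Dark (E : ℕ → ℕ → Prop) : Prop :=
  InfiniteClasses E ∧ ¬ Light E

/-- `E` is algorithmically finite: there is no infinite c.e. set of pairwise
`E`-inequivalent numbers. -/
def AlgFinite (E : ℕ → ℕ → Prop) : Prop :=
  ¬ ∃ W : Set ℕ, CePred (· ∈ W) ∧ W.Infinite ∧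
      ∀ i ∈ W, ∀ j ∈ W, i ≠ j → ¬ E i j

/-- The word problem of a structure with respect to a coding `ν` of words. -/
def WP {α A : Type} (ν : α → A) : α → α → Prop := fun a b => ν a = ν b

open Nat.Partrec (Code)
open Nat.Partrec.Code

theorem ComputablePred.rePred_exists_nat {α : Type} [Primcodable α] {p : α → ℕ → Prop}
    (hp : ComputablePred fun x : α × ℕ => p x.1 x.2) : REPred fun a => ∃ n, p a n := by
  classical
  refine (Partrec.rfind (p := fun a n => Part.some (decide (p a n))) ?_).dom_re.of_eq fun a => ?_
  · exact hp.decide.partrec.to₂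
  · exact ⟨fun ⟨n, hn, _⟩ => ⟨n, by simpa using hn⟩,
      fun ⟨n, hn⟩ => ⟨n, by simpa using hn, fun _ _ => trivial⟩⟩

theorem mem_WSet_iff_exists_evaln {e n : ℕ} :
    n ∈ WSet e ↔ ∃ k, (evaln k (Denumerable.ofNat Code e) n).isSome := by
  simp only [WSet, Set.mem_ofPred_eq, Part.dom_iff_mem, evaln_complete, Option.isSome_iff_exists]
  exact ⟨fun ⟨x, k, hk⟩ => ⟨k, x, hk⟩, fun ⟨k, x, hk⟩ => ⟨x, k, hk⟩⟩

theorem rePred_mem_image_WSet {t : ℕ → ℕ} (ht : Computable t) (e : ℕ) :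
    REPred (· ∈ t '' WSet e) := by
  classical
  let hit : ℕ → ℕ → Prop := fun m z =>
    (evaln z.unpair.2 (Denumerable.ofNat Code e) z.unpair.1).isSome ∧ t z.unpair.1 = m
  have hhalt : Computable fun x : ℕ × ℕ =>
      (evaln x.2.unpair.2 (Denumerable.ofNat Code e) x.2.unpair.1).isSome :=
    (Primrec.option_isSome.comp (primrec_evaln.comp
      (((Primrec.snd.comp (Primrec.unpair.comp Primrec.snd)).pair (Primrec.const _)).pair
        (Primrec.fst.comp (Primrec.unpair.comp Primrec.snd))))).to_comp
  have hmaps : Computable fun x : ℕ × ℕ => decide (t x.2.unpair.1 = x.1) :=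
    Primrec.eq.decide.to_comp.comp
      (ht.comp (Primrec.fst.comp (Primrec.unpair.comp Primrec.snd)).to_comp) Computable.fst
  have hsearch : ComputablePred fun x : ℕ × ℕ => hit x.1 x.2 :=
    computablePred_iff_computable_decide.2
      ((Primrec.and.to_comp.comp hhalt hmaps).of_eq fun x => by simp [hit])
  refine hsearch.rePred_exists_nat.of_eq fun m => ?_
  simp only [hit, Set.mem_image, mem_WSet_iff_exists_evaln]
  constructor
  · rintro ⟨z, hz, rfl⟩
    exact ⟨_, ⟨_, hz⟩, rfl⟩
  · rintro ⟨n, ⟨k, hk⟩, rfl⟩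
    exact ⟨Nat.pair n k, by simpa using hk⟩

theorem exists_WSet_eq {S : Set ℕ} (hS : REPred (· ∈ S)) : ∃ e, WSet e = S := by
  obtain ⟨c, hc⟩ := exists_code.1 (Partrec.nat_iff.1 (hS.map (Computable.const 0).to₂))
  refine ⟨Encodable.encode c, Set.ext fun n => ?_⟩
  simp only [WSet, Set.mem_ofPred_eq, Denumerable.ofNat_encode, hc, Part.map_Dom]
  exact ⟨fun ⟨h, _⟩ => h, fun h => ⟨h, trivial⟩⟩

theorem WP_of_comp_injective {B C : Type} {ι : B → C} (hι : Function.Injective ι)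
    {γ : ℕ → B} {α : ℕ → C} {t : ℕ → ℕ} (htc : ∀ n, ι (γ n) = α (t n)) {i j : ℕ}
    (h : WP α (t i) (t j)) : WP γ i j :=
  hι (by rw [htc, htc]; exact h)

theorem infiniteClasses_WP {B : Type} [Infinite B] {ν : ℕ → B} (hν : Function.Surjective ν) :
    InfiniteClasses (WP ν) := by
  classical
  intro l
  obtain ⟨b, hb⟩ := Infinite.exists_notMem_finset (l.map ν).toFinset
  obtain ⟨n, rfl⟩ := hν b
  exact ⟨n, fun m hm hnm => hb (List.mem_toFinset.2 (List.mem_map.2 ⟨m, hm, hnm.symm⟩))⟩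

theorem Light.of_comap {E E' : ℕ → ℕ → Prop} (hE' : ∀ n, E' n n) {t : ℕ → ℕ}
    (ht : Computable t) (hreflect : ∀ i j, E' (t i) (t j) → E i j) (hE : Light E) :
    Light E' := by
  obtain ⟨e, hinf, htrans⟩ := hE
  obtain ⟨e', he'⟩ := exists_WSet_eq (rePred_mem_image_WSet ht e)
  have hinj : Set.InjOn t (WSet e) := fun i hi j hj hij => by
    by_contra hne
    exact htrans i hi j hj hne (hreflect i j (hij ▸ hE' _))
  refine ⟨e', he' ▸ hinf.image hinj, ?_⟩
  rw [he']
  rintro _ ⟨i, hi, rfl⟩ _ ⟨j, hj, rfl⟩ hne hE'ij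
  exact htrans i hi j hj (ne_of_apply_ne t hne) (hreflect i j hE'ij)

theorem Dark.of_comap {E E' : ℕ → ℕ → Prop} (hE' : ∀ n, E' n n) {t : ℕ → ℕ}
    (ht : Computable t) (hreflect : ∀ i j, E' (t i) (t j) → E i j) (hE : InfiniteClasses E)
    (hdark : Dark E') : Dark E :=
  ⟨hE, fun hlight => hdark.2 (hlight.of_comap hE' ht hreflect)⟩

theorem stmt13_general {A : Type} [Ring A] (G : Subgroup Aˣ)
    (α : ℕ → A)
    (γ : ℕ → G) (hγ : Function.Surjective γ)
    (t : ℕ → ℕ) (ht : Computable t)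
    (htc : ∀ n, ((γ n : Aˣ) : A) = α (t n)) :
    (∀ e, (∀ i ∈ WSet e, ∀ j ∈ WSet e, i ≠ j → γ i ≠ γ j) →
        ∀ i ∈ WSet e, ∀ j ∈ WSet e, i ≠ j → α (t i) ≠ α (t j)) ∧
    (Dark (WP α) → Infinite G → Dark (WP γ)) := by
  have hreflect : ∀ i j, WP α (t i) (t j) → WP γ i j := fun _ _ =>
    WP_of_comp_injective (Units.val_injective.comp Subtype.val_injective) htc
  refine ⟨fun e hdistinct i hi j hj hij h => hdistinct i hi j hj hij (hreflect i j h),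
    fun hdark _ => ?_⟩
  exact Dark.of_comap (E' := WP α) (fun _ => rfl) ht hreflect (infiniteClasses_WP hγ) hdark

/-- Let `A` be a ring, `G` a subgroup of its group of units, `α` a coding of words of `A` and
`γ` a coding of words of `G`, with a computable translation `t` of `G`-words into `A`-words.
Then any c.e. set of `G`-words with pairwise distinct values in `G` translates to `A`-words
with pairwise distinct values in `A`; consequently, if the word problem of `A` is dark and `G`
is infinite then the word problem of `G` is dark. -/
theorem stmt13 {A : Type} [Ring A] (G : Subgroup Aˣ)
    (α : ℕ → A) (hα : Function.Surjective α)
    (γ : ℕ → G) (hγ : Function.Surjective γ)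
    (t : ℕ → ℕ) (ht : Computable t)
    (htc : ∀ n, ((γ n : Aˣ) : A) = α (t n)) :
    (∀ e, (∀ i ∈ WSet e, ∀ j ∈ WSet e, i ≠ j → γ i ≠ γ j) →
        ∀ i ∈ WSet e, ∀ j ∈ WSet e, i ≠ j → α (t i) ≠ α (t j)) ∧
    (Dark (WP α) → Infinite G → Dark (WP γ)) :=
  stmt13_general G α γ hγ t ht htc
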